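/- arXiv:1709.08305 — 4 statements merged into one kernel-verified Lean document; each statement's English description precedes it below -/
import Mathlib

section
/- Let g : ℝ → ℝ be a bounded continuous integrable probability density. For Re(z) > 0 define D(z) = ∫_ℝ g(ω)/(z - iω) dω. Then lim_{x→0+} D(x + iy) = π g(y) - iπ H[g](y) for each y ∈ ℝ, where H[g] denotes the Hilbert transform of g. -/
/-!
The substitution `ω = y - x t` turns `D(x + iy)` into `∫ g(y - x t) / (1 + i t) dt` and the
truncated Hilbert integral `∫_{|y - s| ≥ x} g(s) / (y - s) ds` into `∫_{|t| ≥ 1} g(y - x t) / t dt`.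
So `D(x + iy) + i · (truncated integral)` is `∫ g(y - x t) K(t) dt` with the fixed kernel
`K(t) = (1 + i t)⁻¹ + 1_{|t| ≥ 1} i / t`. The tail `i / t` cancels the `1 / (i t)` decay of
`(1 + i t)⁻¹`, so `K = O(1 / (1 + t²))` is integrable, and `K(t) + K(-t) = 2 / (1 + t²)` gives
`∫ K = π`. Dominated convergence yields `∫ g(y - x t) K(t) dt → π g(y)` as `x → 0`, while the
truncated integrals tend to `π H[g](y)`.
-/

open MeasureTheory Filter Topology Set Complex

noncomputable def plemeljKernel (t : ℝ) : ℂ :=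
  (1 + I * t)⁻¹ + {t : ℝ | 1 ≤ |t|}.indicator (fun t => I / t) t

theorem measurableSet_one_le_abs : MeasurableSet {t : ℝ | 1 ≤ |t|} :=
  measurableSet_le measurable_const (by fun_prop)

theorem one_add_I_mul_ne_zero (t : ℝ) : 1 + I * t ≠ 0 := by
  intro h
  simpa using congrArg re h

theorem norm_inv_one_add_I_mul_le_one (t : ℝ) : ‖(1 + I * t)⁻¹‖ ≤ 1 := by
  rw [norm_inv]
  refine inv_le_one_of_one_le₀ ?_
  simpa using abs_re_le_norm (1 + I * t)

theorem plemeljKernel_eq (t : ℝ) :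
    plemeljKernel t = (1 + if 1 ≤ |t| then I / t else -(I * t)) / (1 + t ^ 2 : ℝ) := by
  have hpos : ((1 + t ^ 2 : ℝ) : ℂ) ≠ 0 := ofReal_ne_zero.2 (by positivity)
  have hfactor : ((1 + t ^ 2 : ℝ) : ℂ) = (1 + I * t) * (1 - I * t) := by
    push_cast; linear_combination (t : ℂ) ^ 2 * I_sq
  have hinv : (1 + I * t)⁻¹ = (1 - I * t) / (1 + t ^ 2 : ℝ) := by
    rw [eq_div_iff hpos, hfactor, ← mul_assoc, inv_mul_cancel₀ (one_add_I_mul_ne_zero t), one_mul]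
  simp only [plemeljKernel, indicator_apply, Set.mem_ofPred_eq, hinv]
  split_ifs with ht
  · have ht0 : (t : ℂ) ≠ 0 := ofReal_ne_zero.2 (by rintro rfl; norm_num at ht)
    field_simp
    push_cast
    ring
  · ring

theorem norm_plemeljKernel_le (t : ℝ) : ‖plemeljKernel t‖ ≤ 2 * (1 + t ^ 2)⁻¹ := by
  have hnum : ‖(1 : ℂ) + if 1 ≤ |t| then I / t else -(I * t)‖ ≤ 2 := by
    refine (norm_add_le _ _).trans ?_
    split_ifs with ht
    · rw [norm_div, norm_I, norm_real, Real.norm_eq_abs, norm_one]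
      linarith [(div_le_one (by linarith)).2 ht]
    · rw [norm_neg, norm_mul, norm_I, norm_real, Real.norm_eq_abs, norm_one]
      linarith
  rw [plemeljKernel_eq, norm_div, norm_real, Real.norm_of_nonneg (by positivity), ← div_eq_mul_inv]
  gcongr

theorem measurable_plemeljKernel : Measurable plemeljKernel :=
  Measurable.add (by fun_prop) (Measurable.indicator (by fun_prop) measurableSet_one_le_abs)

theorem integrable_plemeljKernel : Integrable plemeljKernel :=
  (integrable_inv_one_add_sq.const_mul 2).mono' measurable_plemeljKernel.aestronglyMeasurable
    (ae_of_all _ norm_plemeljKernel_le)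

theorem plemeljKernel_add_plemeljKernel_neg (t : ℝ) :
    plemeljKernel t + plemeljKernel (-t) = (2 * (1 + t ^ 2)⁻¹ : ℝ) := by
  rw [plemeljKernel_eq, plemeljKernel_eq, abs_neg, neg_sq]
  split_ifs <;> push_cast <;> ring

theorem integral_plemeljKernel : ∫ t, plemeljKernel t = Real.pi := by
  have h : (2 : ℂ) * ∫ t, plemeljKernel t = 2 * Real.pi := calc
    (2 : ℂ) * ∫ t, plemeljKernel t = (∫ t, plemeljKernel t) + ∫ t, plemeljKernel (-t) := by
      rw [integral_neg_eq_self]; ring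
    _ = ∫ t : ℝ, ((2 * (1 + t ^ 2)⁻¹ : ℝ) : ℂ) := by
      rw [← integral_add integrable_plemeljKernel integrable_plemeljKernel.comp_neg]
      simp_rw [plemeljKernel_add_plemeljKernel_neg]
    _ = 2 * Real.pi := by
      rw [integral_complex_ofReal, integral_const_mul, integral_univ_inv_one_add_sq]
      push_cast
      ring
  exact mul_left_cancel₀ two_ne_zero h

theorem integral_eq_smul_integral_comp_sub_mul {E : Type*} [NormedAddCommGroup E] [NormedSpace ℝ E]
    (f : ℝ → E) (y : ℝ) {x : ℝ} (hx : 0 < x) :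
    ∫ s, f s = x • ∫ t, f (y - x * t) := by
  rw [Measure.integral_comp_mul_left (fun u => f (y - u)) x, integral_sub_left_eq_self,
    abs_of_pos (inv_pos.2 hx), smul_inv_smul₀ hx.ne']

theorem integral_div_sub_I_mul (f : ℝ → ℂ) (y : ℝ) {x : ℝ} (hx : 0 < x) :
    ∫ ω : ℝ, f ω / (x + I * y - I * ω) = ∫ t : ℝ, f (y - x * t) / (1 + I * t) := by
  rw [integral_eq_smul_integral_comp_sub_mul _ y hx, ← integral_smul]
  congr 1 with t
  have hx' : (x : ℂ) ≠ 0 := ofReal_ne_zero.2 hx.ne'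
  have ht := one_add_I_mul_ne_zero t
  have hden : (x : ℂ) + I * y - I * ((y - x * t : ℝ) : ℂ) = x * (1 + I * t) := by
    push_cast
    ring
  rw [real_smul, hden]
  field_simp

theorem setIntegral_le_abs_sub_div_sub (g : ℝ → ℝ) (y : ℝ) {x : ℝ} (hx : 0 < x) :
    ∫ s in {s : ℝ | x ≤ |y - s|}, g s / (y - s) = ∫ t in {t : ℝ | 1 ≤ |t|}, g (y - x * t) / t := by
  rw [← integral_indicator (measurableSet_le measurable_const (by fun_prop)),
    ← integral_indicator measurableSet_one_le_abs,
    integral_eq_smul_integral_comp_sub_mul _ y hx, ← integral_smul]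
  congr 1 with t
  have hmem : x ≤ |x * t| ↔ 1 ≤ |t| := by
    rw [abs_mul, abs_of_pos hx]
    exact le_mul_iff_one_le_right hx
  simp only [indicator_apply, Set.mem_ofPred_eq, sub_sub_cancel, hmem, smul_eq_mul]
  split_ifs
  · field_simp
  · simp

theorem integral_mul_plemeljKernel {f : ℝ → ℂ} (hf : Integrable f) :
    ∫ t, f t * plemeljKernel t =
      (∫ t, f t / (1 + I * t)) + I * ∫ t in {t : ℝ | 1 ≤ |t|}, f t / t := by
  have hhead : Integrable fun t => f t * (1 + I * t)⁻¹ :=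
    hf.mul_bdd (by fun_prop) (ae_of_all _ norm_inv_one_add_I_mul_le_one)
  have htail : Integrable fun t => f t * {t : ℝ | 1 ≤ |t|}.indicator (fun t => I / t) t := by
    refine hf.mul_bdd (c := 1)
      (Measurable.indicator (by fun_prop) measurableSet_one_le_abs).aestronglyMeasurable
      (ae_of_all _ fun t => ?_)
    simp only [indicator_apply, Set.mem_ofPred_eq]
    split_ifs with ht
    · rw [norm_div, norm_I, norm_real, Real.norm_eq_abs]
      exact (div_le_one (by linarith)).2 ht
    · simp
  have htail_eq : ∫ t, f t * {t : ℝ | 1 ≤ |t|}.indicator (fun t => I / t) t =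
      I * ∫ t in {t : ℝ | 1 ≤ |t|}, f t / t := by
    simp_rw [← indicator_mul_right]
    rw [integral_indicator measurableSet_one_le_abs, ← integral_const_mul]
    congr 1 with t
    ring
  simp only [plemeljKernel, mul_add]
  rw [integral_add hhead htail, htail_eq]
  simp only [div_eq_mul_inv]

theorem tendsto_integral_comp_sub_mul_mul {g K : ℝ → ℂ} {C : ℝ} {y : ℝ} (hg : Measurable g)
    (hgy : ContinuousAt g y) (hC : ∀ s, ‖g s‖ ≤ C) (hK : Integrable K) :
    Tendsto (fun x : ℝ => ∫ t, g (y - x * t) * K t) (𝓝 0) (𝓝 (g y * ∫ t, K t)) := by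
  rw [← integral_const_mul]
  refine tendsto_integral_filter_of_dominated_convergence (fun t => C * ‖K t‖)
    (Eventually.of_forall fun x => ?_) (Eventually.of_forall fun x => ae_of_all _ fun t => ?_)
    (hK.norm.const_mul C) (ae_of_all _ fun t => ?_)
  · exact (hg.comp (by fun_prop)).aestronglyMeasurable.mul hK.aestronglyMeasurable
  · rw [norm_mul]
    exact mul_le_mul_of_nonneg_right (hC _) (norm_nonneg _)
  · have h : Tendsto (fun x : ℝ => y - x * t) (𝓝 0) (𝓝 y) :=
      (by fun_prop : Continuous fun x : ℝ => y - x * t).tendsto' 0 y (by simp)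
    exact (hgy.tendsto.comp h).mul_const _

theorem integral_div_sub_I_mul_eq_sub (g : ℝ → ℝ) (hg : Integrable g) (y : ℝ) {x : ℝ}
    (hx : 0 < x) :
    ∫ ω : ℝ, (g ω : ℂ) / (x + I * y - I * ω) =
      (∫ t, (g (y - x * t) : ℂ) * plemeljKernel t) -
        I * ((∫ s in {s : ℝ | x ≤ |y - s|}, g s / (y - s) : ℝ) : ℂ) := by
  have hgx : Integrable fun t => (g (y - x * t) : ℂ) :=
    ((hg.comp_sub_left y).comp_mul_left' hx.ne').ofReal
  rw [integral_div_sub_I_mul _ y hx, integral_mul_plemeljKernel hgx,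
    setIntegral_le_abs_sub_div_sub g y hx, ← integral_complex_ofReal]
  push_cast
  ring

/-- Sokhotski–Plemelj: for `g` bounded continuous integrable and
`D(z) = ∫ g(ω)/(z - iω) dω` (Re z > 0), one has
`lim_{x→0+} D(x+iy) = π g(y) - iπ H[g](y)` where `H[g]` is the Hilbert transform. -/
theorem stmt1 (g : ℝ → ℝ) (hb : ∃ C, ∀ x, |g x| ≤ C) (hc : Continuous g)
    (hint : Integrable g) (Hg : ℝ → ℝ)
    (hH : ∀ y : ℝ, Tendsto (fun ε : ℝ => ∫ s in {s : ℝ | ε ≤ |y - s|}, g s / (y - s))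
        (𝓝[>] 0) (𝓝 (Real.pi * Hg y))) :
    ∀ y : ℝ, Tendsto
      (fun x : ℝ => ∫ ω : ℝ, (g ω : ℂ) / (((x : ℂ) + Complex.I * (y : ℂ)) - Complex.I * (ω : ℂ)))
      (𝓝[>] 0)
      (𝓝 (((Real.pi * g y : ℝ) : ℂ) - Complex.I * ((Real.pi * Hg y : ℝ) : ℂ))) := by
  intro y
  obtain ⟨C, hC⟩ := hb
  have hconv : Tendsto (fun x : ℝ => ∫ t, (g (y - x * t) : ℂ) * plemeljKernel t) (𝓝[>] 0)
      (𝓝 ((Real.pi * g y : ℝ) : ℂ)) := by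
    have h := tendsto_integral_comp_sub_mul_mul (g := fun s => (g s : ℂ)) (y := y)
      (by fun_prop) (by fun_prop) (fun s => (norm_real _).trans_le (hC s))
      integrable_plemeljKernel
    rw [integral_plemeljKernel] at h
    convert h.mono_left nhdsWithin_le_nhds using 2
    push_cast
    ring
  have htrunc := ((continuous_ofReal.tendsto _).comp (hH y)).const_mul I
  refine (hconv.sub htrunc).congr' ?_
  filter_upwards [self_mem_nhdsWithin] with x hx
  exact (integral_div_sub_I_mul_eq_sub g hint y hx).symm
end

section
/- Consider the planar ODE system ṙ₋ = p₁ r₋ (ε − q (r₋² + 2 r₊²)), ṙ₊ = p₁ r₊ (ε − q (r₊² + 2 r₋²)) on [0,∞)², with constants p₁, q, ε > 0. Then the fixed points are (0,0), (0, √(ε/q)), (√(ε/q), 0), and (√(ε/(3q)), √(ε/(3q))); the Jacobian at (0,0) is εp₁·Id (unstable), at (0, √(ε/q)) it is diag(−εp₁, −2εp₁) (asymptotically stable), at (√(ε/q), 0) it is diag(−2εp₁, −εp₁) (asymptotically stable), and at the symmetric fixed point the Jacobian is (2εp₁/3)·[[−1,−2],[−2,−1]], which has a positive eigenvalue 2εp₁/3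 and hence that fixed point is a saddle. -/
/-! On `[0,∞)²` a zero of the field has each coordinate zero or its bracket zero; when both
brackets vanish their difference forces `r₋² = r₊²`, which gives the symmetric point. The
Jacobian is computed once symbolically and evaluated using `q t² = ε` and `3 q s² = ε`. -/

-- `v = (r₋, r₊)`
def slowField (p₁ q ε : ℝ) (v : ℝ × ℝ) : ℝ × ℝ :=
  (p₁ * v.1 * (ε - q * (v.1^2 + 2*v.2^2)), p₁ * v.2 * (ε - q * (v.2^2 + 2*v.1^2)))

lemma eq_sqrt_div_iff {x c ε : ℝ} (hx : 0 ≤ x) (hc : 0 < c) (hε : 0 ≤ ε) :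
    x = √(ε / c) ↔ c * x^2 = ε := by
  rw [eq_comm, Real.sqrt_eq_iff_eq_sq (div_nonneg hε hc.le) hx, div_eq_iff hc.ne', mul_comm,
    eq_comm]

section

variable {p₁ q ε : ℝ}

lemma slowField_eq_zero_iff (hp : p₁ ≠ 0) (v : ℝ × ℝ) :
    slowField p₁ q ε v = 0 ↔
      (v.1 = 0 ∨ q * (v.1^2 + 2*v.2^2) = ε) ∧ (v.2 = 0 ∨ q * (v.2^2 + 2*v.1^2) = ε) := by
  simp [slowField, Prod.ext_iff, hp, sub_eq_zero, eq_comm (a := ε)]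

lemma slowField_eq_zero_iff_of_nonneg (hp : 0 < p₁) (hq : 0 < q) (hε : 0 < ε) {v : ℝ × ℝ}
    (h₁ : 0 ≤ v.1) (h₂ : 0 ≤ v.2) :
    slowField p₁ q ε v = 0 ↔ v = (0, 0) ∨ v = (0, √(ε / q)) ∨ v = (√(ε / q), 0) ∨
      v = (√(ε / (3*q)), √(ε / (3*q))) := by
  obtain ⟨x, y⟩ := v
  have h3q : 0 < 3 * q := by positivity
  simp only [slowField_eq_zero_iff hp.ne', Prod.mk.injEq, eq_sqrt_div_iff h₁ hq hε.le,
    eq_sqrt_div_iff h₂ hq hε.le, eq_sqrt_div_iff h₁ h3q hε.le, eq_sqrt_div_iff h₂ h3q hε.le]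
  constructor
  · rintro ⟨rfl | hx, rfl | hy⟩
    · simp
    · right; left; exact ⟨rfl, by linear_combination hy⟩
    · right; right; left; exact ⟨by linear_combination hx, rfl⟩
    · have hxy : x^2 = y^2 := mul_left_cancel₀ hq.ne' (by linear_combination hy - hx)
      right; right; right
      exact ⟨by linear_combination hy + q * hxy, by linear_combination hx - q * hxy⟩
  · rintro (⟨rfl, rfl⟩ | ⟨rfl, hy⟩ | ⟨hx, rfl⟩ | ⟨hx, hy⟩)
    · simp
    · exact ⟨Or.inl rfl, Or.inr (by linear_combination hy)⟩
    · exact ⟨Or.inr (by linear_combination hx), Or.inl rfl⟩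
    · exact ⟨Or.inr (by linear_combination hx / 3 + 2 * hy / 3),
        Or.inr (by linear_combination hy / 3 + 2 * hx / 3)⟩

lemma fderiv_slowField_apply (v u : ℝ × ℝ) :
    fderiv ℝ (slowField p₁ q ε) v u =
      (p₁ * (ε - q * (3*v.1^2 + 2*v.2^2)) * u.1 - 4*p₁*q*v.1*v.2 * u.2,
        -(4*p₁*q*v.1*v.2) * u.1 + p₁ * (ε - q * (3*v.2^2 + 2*v.1^2)) * u.2) := by
  have hf : HasFDerivAt (fun v : ℝ × ℝ => v.1) (ContinuousLinearMap.fst ℝ ℝ ℝ) v :=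
    hasFDerivAt_fst
  have hs : HasFDerivAt (fun v : ℝ × ℝ => v.2) (ContinuousLinearMap.snd ℝ ℝ ℝ) v :=
    hasFDerivAt_snd
  have h₁ := (hf.const_mul p₁).mul
    ((hasFDerivAt_const ε v).sub (((hf.pow 2).add ((hs.pow 2).const_mul 2)).const_mul q))
  have h₂ := (hs.const_mul p₁).mul
    ((hasFDerivAt_const ε v).sub (((hs.pow 2).add ((hf.pow 2).const_mul 2)).const_mul q))
  have h : HasFDerivAt (slowField p₁ q ε) _ v := h₁.prodMk h₂
  rw [h.fderiv]
  ext <;> simp <;> ring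

end

/-- The truncated slow-manifold system `ṙ₋ = p₁r₋(ε − q(r₋²+2r₊²))`,
`ṙ₊ = p₁r₊(ε − q(r₊²+2r₋²))` on `[0,∞)²`: its fixed points are `(0,0)`,
`(0,√(ε/q))`, `(√(ε/q),0)`, `(√(ε/3q),√(ε/3q))`; the Jacobian at the origin is
`εp₁·Id` (unstable), at the two axis fixed points it is `diag(−εp₁,−2εp₁)` resp.
`diag(−2εp₁,−εp₁)` (asymptotically stable), and at the symmetric fixed point it is
`(2εp₁/3)[[−1,−2],[−2,−1]]`, which has the positive eigenvalue `2εp₁/3` (saddle). -/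
theorem stmt12 (p₁ q ε : ℝ) (hp : 0 < p₁) (hq : 0 < q) (hε : 0 < ε) :
    let F : ℝ × ℝ → ℝ × ℝ := fun v =>
      (p₁ * v.1 * (ε - q * (v.1^2 + 2*v.2^2)), p₁ * v.2 * (ε - q * (v.2^2 + 2*v.1^2)))
    let s := Real.sqrt (ε / (3*q))
    let t := Real.sqrt (ε / q)
    (∀ v : ℝ × ℝ, 0 ≤ v.1 → 0 ≤ v.2 →
      (F v = 0 ↔ v = (0,0) ∨ v = (0,t) ∨ v = (t,0) ∨ v = (s,s))) ∧
    fderiv ℝ F (0,0) = (ε*p₁) • ContinuousLinearMap.id ℝ (ℝ × ℝ) ∧ 0 < ε*p₁ ∧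
    (∀ u : ℝ × ℝ, fderiv ℝ F (0,t) u = (-(ε*p₁)*u.1, -(2*ε*p₁)*u.2)) ∧
    (∀ u : ℝ × ℝ, fderiv ℝ F (t,0) u = (-(2*ε*p₁)*u.1, -(ε*p₁)*u.2)) ∧
    (-(ε*p₁) < 0 ∧ -(2*ε*p₁) < 0) ∧
    (∀ u : ℝ × ℝ, fderiv ℝ F (s,s) u =
      ((2*ε*p₁/3) * (-u.1 - 2*u.2), (2*ε*p₁/3) * (-2*u.1 - u.2))) ∧
    fderiv ℝ F (s,s) ((1:ℝ),(-1:ℝ)) = (2*ε*p₁/3) • ((1:ℝ),(-1:ℝ)) ∧ 0 < 2*ε*p₁/3 := by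
  intro F s t
  have hF : F = slowField p₁ q ε := rfl
  have ht : q * t^2 = ε := (eq_sqrt_div_iff (Real.sqrt_nonneg _) hq hε.le).mp rfl
  have hs : 3 * q * s^2 = ε := (eq_sqrt_div_iff (Real.sqrt_nonneg _) (by positivity) hε.le).mp rfl
  have hJs (u : ℝ × ℝ) : fderiv ℝ F (s,s) u =
      ((2*ε*p₁/3) * (-u.1 - 2*u.2), (2*ε*p₁/3) * (-2*u.1 - u.2)) := by
    rw [hF, fderiv_slowField_apply, ← hs]
    ext <;> ring
  refine ⟨fun v h₁ h₂ => slowField_eq_zero_iff_of_nonneg hp hq hε h₁ h₂, ?_, by positivity,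
    fun u => ?_, fun u => ?_, ⟨neg_neg_of_pos (by positivity), neg_neg_of_pos (by positivity)⟩,
    hJs, ?_, by positivity⟩
  · ext <;> simp [hF, fderiv_slowField_apply] <;> ring
  · rw [hF, fderiv_slowField_apply, ← ht]
    ext <;> ring
  · rw [hF, fderiv_slowField_apply, ← ht]
    ext <;> ring
  · rw [hJs]
    ext <;> simp <;> ring
end

section
/- Let H = L²(ℝ × [0,1], g dω dx), P the bounded operator (P f)(x) = ∫₀¹∫_ℝ W(x,y) f(ω,y) g(ω) dω dy (a rank structure through the Hilbert–Schmidt kernel W), M multiplication by iω, and T = M + (K/2)P with K ∈ ℝ. Suppose λ ∈ ℂ with Re(λ) > 0 is an eigenvalue of T with eigenfunction v ∈ H, and set w(x) = ∫_ℝ v(ω, x) g(ω) dω ∈ L²(0,1). If w ≠ 0, then w satisfies w = (K/2) D(λ) W[w], where D(λ) = ∫_ℝ g(ω)/(λ − iω) dω and W is the integral operator with kernel W on L²(0,1); consequently D(λ) = 2/(Kμ) for some nonzero eigenvalue μ of W. -/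
/-!
Since `Re λ > 0`, `λ - iω` never vanishes, so the eigenvalue equation can be solved pointwise:
`v(ω,x) = (K/2) W[w](x) / (λ - iω)`. Integrating against `g` gives `w = (K/2) D(λ) W[w]`; if
`w ≠ 0` this forces `D(λ) ≠ 0`, and `w` is an eigenfunction of `W` with eigenvalue
`μ = 2 / (K D(λ))`.
-/

open MeasureTheory Complex

noncomputable def dispersion (g : ℝ → ℝ) (lam : ℂ) : ℂ :=
  ∫ ω : ℝ, (g ω : ℂ) / (lam - I * (ω : ℂ))

lemma sub_I_mul_ofReal_ne_zero {lam : ℂ} (hlam : 0 < lam.re) (ω : ℝ) : lam - I * ω ≠ 0 := by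
  intro h
  have hre := congrArg re h
  simp only [sub_re, mul_re, I_re, I_im, ofReal_re, ofReal_im, zero_re] at hre
  linarith

lemma eq_div_of_I_mul_add_eq {lam c z : ℂ} {ω : ℝ} (hne : lam - I * ω ≠ 0)
    (h : I * ω * z + c = lam * z) : z = c / (lam - I * ω) := by
  rw [eq_div_iff hne]
  linear_combination -h

lemma integral_mul_density_eq_mul_dispersion {lam c : ℂ} (hlam : 0 < lam.re) {f : ℝ → ℂ}
    (g : ℝ → ℝ) (hf : ∀ ω : ℝ, I * ω * f ω + c = lam * f ω) :
    ∫ ω : ℝ, f ω * g ω = c * dispersion g lam := by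
  have hfg : (fun ω : ℝ => f ω * g ω) = fun ω => c * ((g ω : ℂ) / (lam - I * ω)) := by
    funext ω
    rw [eq_div_of_I_mul_add_eq (sub_I_mul_ofReal_ne_zero hlam ω) (hf ω)]
    ring
  rw [hfg, integral_const_mul, dispersion]

lemma exists_eigenvalue_of_eq_mul {α : Type*} {K D : ℂ} {w P : α → ℂ} (hK : K ≠ 0)
    (h : ∀ x, w x = K / 2 * D * P x) (hw : ∃ x, w x ≠ 0) :
    ∃ μ : ℂ, μ ≠ 0 ∧ (∀ x, P x = μ * w x) ∧ D = 2 / (K * μ) := by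
  obtain ⟨x₀, hx₀⟩ := hw
  have hD : D ≠ 0 := by
    rintro rfl
    exact hx₀ (by rw [h x₀]; ring)
  refine ⟨2 / (K * D), div_ne_zero two_ne_zero (mul_ne_zero hK hD), fun x => ?_, ?_⟩
  · rw [h x]
    field_simp
  · field_simp

theorem stmt17_general (W : ℝ → ℝ → ℝ)
    (g : ℝ → ℝ)
    (K : ℝ) (lam : ℂ) (hlam : 0 < lam.re)
    (v : ℝ → ℝ → ℂ) (w : ℝ → ℂ)
    (hw : ∀ x, w x = ∫ ω : ℝ, v ω x * (g ω : ℂ))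
    (heig : ∀ ω x : ℝ, Complex.I * (ω : ℂ) * v ω x
        + (K / 2 : ℂ) * (∫ y in (0:ℝ)..1, (W x y : ℂ) * w y) = lam * v ω x) :
    (∀ x : ℝ, w x = (K / 2 : ℂ) * (∫ ω : ℝ, (g ω : ℂ) / (lam - Complex.I * (ω : ℂ)))
        * ∫ y in (0:ℝ)..1, (W x y : ℂ) * w y) ∧
    (K ≠ 0 → (∃ x ∈ Set.Icc (0:ℝ) 1, w x ≠ 0) →
      ∃ μ : ℂ, μ ≠ 0 ∧
        (∀ x ∈ Set.Icc (0:ℝ) 1, (∫ y in (0:ℝ)..1, (W x y : ℂ) * w y) = μ * w x) ∧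
        (∫ ω : ℝ, (g ω : ℂ) / (lam - Complex.I * (ω : ℂ))) = 2 / ((K : ℂ) * μ)) := by
  have hself : ∀ x : ℝ, w x = (K / 2 : ℂ) * dispersion g lam
      * ∫ y in (0:ℝ)..1, (W x y : ℂ) * w y := fun x => by
    rw [hw x, integral_mul_density_eq_mul_dispersion hlam g (heig · x)]
    ring
  refine ⟨hself, fun hK ⟨x₀, _, hx₀⟩ => ?_⟩
  obtain ⟨μ, hμ, hWw, hD⟩ := exists_eigenvalue_of_eq_mul (ofReal_ne_zero.mpr hK) hself ⟨x₀, hx₀⟩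
  exact ⟨μ, hμ, fun x _ => hWw x, hD⟩

/-- If `λ` with `Re λ > 0` is an eigenvalue of `T = iω + (K/2)P` with eigenfunction
`v`, and `w(x) = ∫ v(ω,x) g(ω) dω`, then `w = (K/2) D(λ) W[w]` with
`D(λ) = ∫ g(ω)/(λ−iω) dω`; consequently, if `w ≠ 0`, then `D(λ) = 2/(Kμ)` for some
nonzero eigenvalue `μ` of the integral operator `W`. -/
theorem stmt17 (W : ℝ → ℝ → ℝ) (hWsym : ∀ x y, W x y = W y x)
    (hWbd : ∀ x y, W x y ∈ Set.Icc (-1:ℝ) 1)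
    (g : ℝ → ℝ) (hg : Continuous g) (hgnn : ∀ ω, 0 ≤ g ω) (hgint : ∫ ω, g ω = 1)
    (K : ℝ) (lam : ℂ) (hlam : 0 < lam.re)
    (v : ℝ → ℝ → ℂ) (w : ℝ → ℂ)
    (hw : ∀ x, w x = ∫ ω : ℝ, v ω x * (g ω : ℂ))
    (hvint : ∀ x, Integrable (fun ω : ℝ => v ω x * (g ω : ℂ)))
    (hWw : ∀ x, IntervalIntegrable (fun y => (W x y : ℂ) * w y) volume 0 1)
    (hDint : Integrable (fun ω : ℝ => (g ω : ℂ) / (lam - Complex.I * (ω : ℂ))))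
    (heig : ∀ ω x : ℝ, Complex.I * (ω : ℂ) * v ω x
        + (K / 2 : ℂ) * (∫ y in (0:ℝ)..1, (W x y : ℂ) * w y) = lam * v ω x) :
    (∀ x : ℝ, w x = (K / 2 : ℂ) * (∫ ω : ℝ, (g ω : ℂ) / (lam - Complex.I * (ω : ℂ)))
        * ∫ y in (0:ℝ)..1, (W x y : ℂ) * w y) ∧
    (K ≠ 0 → (∃ x ∈ Set.Icc (0:ℝ) 1, w x ≠ 0) →
      ∃ μ : ℂ, μ ≠ 0 ∧
        (∀ x ∈ Set.Icc (0:ℝ) 1, (∫ y in (0:ℝ)..1, (W x y : ℂ) * w y) = μ * w x) ∧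
        (∫ ω : ℝ, (g ω : ℂ) / (lam - Complex.I * (ω : ℂ))) = 2 / ((K : ℂ) * μ)) :=
  stmt17_general W g K lam hlam v w hw heig
end

section
/- Under the setup of the eigenvalue equation D(λ) = 2/(Kμ) with g an even, unimodal, continuous probability density and D(λ) = ∫_ℝ g(ω)/(λ − iω) dω for Re(λ) > 0: the restriction of D to the positive real axis, λ ↦ D(λ) for λ > 0, is real-valued, strictly decreasing, with lim_{λ→0+} D(λ) = π g(0) and lim_{λ→∞} D(λ) = 0. Consequently, for each μ > 0, the equation D(λ) = 2/(Kμ) has a (unique) positive real solution λ(μ,K) if and only if K > 2/(π g(0) μ), and λ(μ,K) → 0+ as K → (2/(π g(0) μ))+ and λ(μ,K) → ∞ as K → ∞. -/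
/-!
For `λ > 0` the substitution `ω = λu` turns `Re D(λ)` into `∫ g(λu)/(1+u²) du`. This integral is
continuous in `λ ∈ ℝ` (dominated by `g(0)/(1+u²)`), equals `π g(0)` at `λ = 0`, is at most
`(∫ g)/λ`, and decreases strictly because `g` is even, unimodal and not constant. The imaginary
part vanishes because the integrand at `-ω` is the conjugate of the one at `ω`. The statements
about `D(λ) = 2/(Kμ)` only use that a continuous function decreasing strictly from `π g(0)` to `0`
on `(0, ∞)` is a bijection onto `(0, π g(0))` whose inverse tends to `0` and to `∞` at the ends.
-/

open MeasureTheory Filter Topology Set Complex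

lemma Function.Even.le_of_abs_le {g : ℝ → ℝ} (hg : g.Even) (hmono : AntitoneOn g (Ici 0))
    {x y : ℝ} (h : |x| ≤ |y|) : g y ≤ g x := by
  have habs : ∀ z, g |z| = g z := fun z => by rcases abs_choice z with hz | hz <;> simp [hz, hg.eq]
  rw [← habs x, ← habs y]
  exact hmono (abs_nonneg x) (abs_nonneg y) h

lemma eq_apply_zero_of_apply_mul_eq {g : ℝ → ℝ} (hg : ContinuousAt g 0) {c : ℝ} (hc₀ : 0 ≤ c)
    (hc₁ : c < 1) (hscale : ∀ t, g (c * t) = g t) (t : ℝ) : g t = g 0 := by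
  have hpow : ∀ n : ℕ, g (c ^ n * t) = g t := by
    intro n
    induction n with
    | zero => simp
    | succ n ih => rw [pow_succ', mul_assoc, hscale, ih]
  have hlim : Tendsto (fun n : ℕ => g (c ^ n * t)) atTop (𝓝 (g 0)) := by
    refine hg.tendsto.comp ?_
    simpa using (tendsto_pow_atTop_nhds_zero_of_lt_one hc₀ hc₁).mul_const t
  simp only [hpow] at hlim
  exact tendsto_nhds_unique tendsto_const_nhds hlim

lemma exists_apply_ne_apply_zero_of_integrable {g : ℝ → ℝ} (hint : Integrable g) (hg0 : g 0 ≠ 0) :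
    ∃ x, g x ≠ g 0 := by
  by_contra! hconst
  have : Integrable (fun _ : ℝ => g 0) := hint.congr (.of_forall hconst)
  rw [integrable_const_iff] at this
  rcases this with h | h
  · exact hg0 h
  · simp [isFiniteMeasure_iff] at h

noncomputable def cauchyAverage (g : ℝ → ℝ) (lam : ℝ) : ℝ := ∫ u, g (lam * u) / (1 + u ^ 2)

lemma cauchyAverage_zero (g : ℝ → ℝ) : cauchyAverage g 0 = Real.pi * g 0 := by
  simp_rw [cauchyAverage, zero_mul, div_eq_mul_inv, integral_const_mul,
    integral_univ_inv_one_add_sq, mul_comm]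

lemma cauchyAverage_eq_integral (g : ℝ → ℝ) {lam : ℝ} (hlam : 0 < lam) :
    cauchyAverage g lam = ∫ ω, lam * g ω / (lam ^ 2 + ω ^ 2) := by
  have h := Measure.integral_comp_mul_left (fun ω => lam * g ω / (lam ^ 2 + ω ^ 2)) lam
  rw [abs_of_pos (inv_pos.2 hlam), smul_eq_mul, eq_inv_mul_iff_mul_eq₀ hlam.ne',
    ← integral_const_mul] at h
  rw [← h, cauchyAverage]
  congr 1 with u
  field_simp

section
variable {g : ℝ → ℝ} {C : ℝ}

lemma continuous_apply_mul_div_one_add_sq (hg : Continuous g) (lam : ℝ) :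
    Continuous (fun u => g (lam * u) / (1 + u ^ 2)) :=
  (hg.comp (continuous_const_mul lam)).div (by fun_prop) fun u => by positivity

lemma abs_apply_mul_div_one_add_sq_le (hC : ∀ x, |g x| ≤ C) (lam u : ℝ) :
    |g (lam * u) / (1 + u ^ 2)| ≤ C * (1 + u ^ 2)⁻¹ := by
  rw [abs_div, abs_of_pos (by positivity : (0 : ℝ) < 1 + u ^ 2), div_eq_mul_inv]
  exact mul_le_mul_of_nonneg_right (hC _) (by positivity)

lemma integrable_apply_mul_div_one_add_sq (hg : Continuous g) (hC : ∀ x, |g x| ≤ C) (lam : ℝ) :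
    Integrable (fun u => g (lam * u) / (1 + u ^ 2)) :=
  (integrable_inv_one_add_sq.const_mul C).mono'
    (continuous_apply_mul_div_one_add_sq hg lam).aestronglyMeasurable
    (.of_forall (abs_apply_mul_div_one_add_sq_le hC lam))

lemma continuous_cauchyAverage (hg : Continuous g) (hC : ∀ x, |g x| ≤ C) :
    Continuous (cauchyAverage g) :=
  continuous_of_dominated
    (fun lam => (continuous_apply_mul_div_one_add_sq hg lam).aestronglyMeasurable)
    (fun lam => .of_forall (abs_apply_mul_div_one_add_sq_le hC lam))
    (integrable_inv_one_add_sq.const_mul C)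
    (.of_forall fun u => (hg.comp (continuous_mul_const u)).div_const _)

end

section
variable {g : ℝ → ℝ}

lemma strictAntiOn_cauchyAverage {C : ℝ} (hg : Continuous g) (hC : ∀ x, |g x| ≤ C)
    (heven : g.Even) (hmono : AntitoneOn g (Ici 0)) (hne : ∃ x, g x ≠ g 0) :
    StrictAntiOn (cauchyAverage g) (Ioi 0) := by
  intro a ha b hb hab
  rw [mem_Ioi] at ha hb
  have hle : ∀ u, g (b * u) ≤ g (a * u) := fun u =>
    heven.le_of_abs_le hmono (by rw [abs_mul, abs_mul, abs_of_pos ha, abs_of_pos hb]; gcongr)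
  -- equality everywhere would make `g` invariant under `t ↦ (a / b) t`, hence constant
  obtain ⟨u, hu⟩ : ∃ u, g (b * u) ≠ g (a * u) := by
    by_contra! h
    obtain ⟨x, hx⟩ := hne
    refine hx (eq_apply_zero_of_apply_mul_eq hg.continuousAt (c := a / b) (by positivity)
      ((div_lt_one hb).2 hab) (fun t => ?_) x)
    calc g (a / b * t) = g (a * (t / b)) := by ring_nf
      _ = g t := by rw [← h, mul_div_cancel₀ t hb.ne']
  have hpos : 0 < ∫ u, (g (a * u) / (1 + u ^ 2) - g (b * u) / (1 + u ^ 2)) :=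
    integral_pos_of_integrable_nonneg_nonzero (x := u)
      ((continuous_apply_mul_div_one_add_sq hg a).sub (continuous_apply_mul_div_one_add_sq hg b))
      ((integrable_apply_mul_div_one_add_sq hg hC a).sub
        (integrable_apply_mul_div_one_add_sq hg hC b))
      (fun u => sub_nonneg.2 (div_le_div_of_nonneg_right (hle u) (by positivity)))
      (sub_ne_zero.2 fun h => hu ((div_left_inj' (by positivity)).1 h).symm)
  rw [integral_sub (integrable_apply_mul_div_one_add_sq hg hC a)
    (integrable_apply_mul_div_one_add_sq hg hC b)] at hpos
  exact sub_pos.1 hpos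

lemma cauchyAverage_le_integral_div (hnn : ∀ x, 0 ≤ g x) (hint : Integrable g) {lam : ℝ}
    (hlam : 0 < lam) : cauchyAverage g lam ≤ (∫ ω, g ω) / lam := by
  rw [cauchyAverage_eq_integral g hlam, ← integral_div]
  refine integral_mono_of_nonneg (.of_forall fun ω => by have := hnn ω; positivity)
    (hint.div_const lam) (.of_forall fun ω => ?_)
  rw [div_le_div_iff₀ (by positivity) hlam]
  nlinarith [hnn ω, sq_nonneg ω]

lemma tendsto_cauchyAverage_atTop (hnn : ∀ x, 0 ≤ g x) (hint : Integrable g) :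
    Tendsto (cauchyAverage g) atTop (𝓝 0) :=
  squeeze_zero'
    (.of_forall fun lam => integral_nonneg fun u => by have := hnn (lam * u); positivity)
    ((eventually_gt_atTop 0).mono fun _ => cauchyAverage_le_integral_div hnn hint)
    (tendsto_const_nhds.div_atTop tendsto_id)

lemma im_integral_div_sub_I_mul_eq_zero (heven : g.Even) (lam : ℝ) :
    (∫ ω : ℝ, (g ω : ℂ) / (lam - I * ω)).im = 0 := by
  refine conj_eq_iff_im.1 ?_
  rw [← integral_conj, ← integral_neg_eq_self]
  congr 1 with ω
  simp [heven.eq, map_div₀, sub_eq_add_neg]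

lemma re_integral_div_sub_I_mul (hint : Integrable g) {lam : ℝ} (hlam : 0 < lam) :
    (∫ ω : ℝ, (g ω : ℂ) / (lam - I * ω)).re = cauchyAverage g lam := by
  have hint' : Integrable (fun ω : ℝ => (g ω : ℂ) / (lam - I * ω)) := by
    refine (hint.norm.div_const lam).mono'
      (hint.ofReal.aestronglyMeasurable.div₀ (by fun_prop : Continuous fun ω : ℝ =>
        (lam : ℂ) - I * ω).aestronglyMeasurable) (.of_forall fun ω => ?_)
    have hre : lam ≤ ‖(lam : ℂ) - I * ω‖ :=
      (le_abs_self lam).trans (by simpa using abs_re_le_norm ((lam : ℂ) - I * ω))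
    rw [norm_div, norm_real]
    exact div_le_div_of_nonneg_left (norm_nonneg _) hlam hre
  rw [cauchyAverage_eq_integral g hlam, ← reCLM_apply,
    ← ContinuousLinearMap.integral_comp_comm _ hint']
  congr 1 with ω
  simp [div_re, normSq_apply]
  ring

end

namespace StrictAntiOn
variable {F : ℝ → ℝ} {L : ℝ}

lemma lt_of_tendsto_nhdsGT_zero (hF : StrictAntiOn F (Ioi 0)) (h0 : Tendsto F (𝓝[>] 0) (𝓝 L))
    {x : ℝ} (hx : 0 < x) : F x < L :=
  (hF (half_pos hx) hx (half_lt_self hx)).trans_le <| ge_of_tendsto h0 <|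
    mem_of_superset (Ioo_mem_nhdsGT (half_pos hx)) fun _ hy =>
      hF.antitoneOn hy.1 (half_pos hx) hy.2.le

lemma pos_of_tendsto_atTop_zero (hF : StrictAntiOn F (Ioi 0)) (htop : Tendsto F atTop (𝓝 0))
    {x : ℝ} (hx : 0 < x) : 0 < F x :=
  (le_of_tendsto htop <| (eventually_ge_atTop (x + 1)).mono fun _ hy =>
    hF.antitoneOn (mem_Ioi.2 (by linarith)) (mem_Ioi.2 (by linarith)) hy).trans_lt
      (hF hx (mem_Ioi.2 (by linarith)) (lt_add_one x))

lemma existsUnique_pos_eq_iff (hF : StrictAntiOn F (Ioi 0)) (hcont : ContinuousOn F (Ioi 0))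
    (h0 : Tendsto F (𝓝[>] 0) (𝓝 L)) (htop : Tendsto F atTop (𝓝 0)) {c : ℝ} (hc : 0 < c) :
    (∃! x, 0 < x ∧ F x = c) ↔ c < L := by
  refine ⟨fun ⟨x, ⟨hx, hFx⟩, _⟩ => hFx ▸ hF.lt_of_tendsto_nhdsGT_zero h0 hx, fun hcL => ?_⟩
  obtain ⟨a, hca, ha⟩ := ((h0.eventually (eventually_gt_nhds hcL)).and self_mem_nhdsWithin).exists
  obtain ⟨b, hbc, hab⟩ :=
    ((htop.eventually (eventually_lt_nhds hc)).and (eventually_ge_atTop a)).exists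
  obtain ⟨x, hx, hFx⟩ := intermediate_value_Icc' hab
    (hcont.mono fun y hy => lt_of_lt_of_le ha hy.1) ⟨hbc.le, hca.le⟩
  have hx0 : 0 < x := lt_of_lt_of_le ha hx.1
  exact ⟨x, ⟨hx0, hFx⟩, fun y ⟨hy, hFy⟩ => hF.injOn hy hx0 (hFy.trans hFx.symm)⟩

lemma tendsto_nhdsGT_zero_of_tendsto_comp (hF : StrictAntiOn F (Ioi 0))
    (h0 : Tendsto F (𝓝[>] 0) (𝓝 L)) {ι : Type*} {l : Filter ι} {x : ι → ℝ}
    (hx : ∀ᶠ i in l, 0 < x i) (hFx : Tendsto (fun i => F (x i)) l (𝓝 L)) :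
    Tendsto x l (𝓝[>] 0) := by
  refine tendsto_nhdsWithin_iff.2 ⟨tendsto_order.2 ⟨fun a ha => hx.mono fun i hi => ha.trans hi,
    fun ε hε => ?_⟩, hx⟩
  filter_upwards [hFx.eventually (eventually_gt_nhds (hF.lt_of_tendsto_nhdsGT_zero h0 hε)), hx]
    with i hFi hi
  exact (hF.lt_iff_gt hε hi).1 hFi

lemma tendsto_atTop_of_tendsto_comp (hF : StrictAntiOn F (Ioi 0))
    (htop : Tendsto F atTop (𝓝 0)) {ι : Type*} {l : Filter ι} {x : ι → ℝ}
    (hx : ∀ᶠ i in l, 0 < x i) (hFx : Tendsto (fun i => F (x i)) l (𝓝 0)) :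
    Tendsto x l atTop := by
  refine tendsto_atTop.2 fun M => ?_
  have hM : (0 : ℝ) < max M 1 := lt_max_of_lt_right one_pos
  filter_upwards [hFx.eventually (eventually_lt_nhds (hF.pos_of_tendsto_atTop_zero htop hM)), hx]
    with i hFi hi
  exact (le_max_left M 1).trans ((hF.lt_iff_gt hi hM).1 hFi).le

lemma existsUnique_pos_eq_two_div_iff (hF : StrictAntiOn F (Ioi 0))
    (hcont : ContinuousOn F (Ioi 0)) (h0 : Tendsto F (𝓝[>] 0) (𝓝 L))
    (htop : Tendsto F atTop (𝓝 0)) (hL : 0 < L) {μ K : ℝ} (hμ : 0 < μ) (hK : 0 < K) :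
    (∃! x, 0 < x ∧ F x = 2 / (K * μ)) ↔ 2 / (L * μ) < K := by
  rw [hF.existsUnique_pos_eq_iff hcont h0 htop (by positivity), div_lt_iff₀ (by positivity),
    div_lt_iff₀ (by positivity)]
  ring_nf

lemma tendsto_nhdsGT_zero_of_eq_two_div (hF : StrictAntiOn F (Ioi 0))
    (h0 : Tendsto F (𝓝[>] 0) (𝓝 L)) (hL : 0 < L) {μ : ℝ} (hμ : 0 < μ) {x : ℝ → ℝ}
    (hx : ∀ K, 2 / (L * μ) < K → 0 < x K ∧ F (x K) = 2 / (K * μ)) :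
    Tendsto x (𝓝[>] (2 / (L * μ))) (𝓝[>] 0) := by
  have hlim : Tendsto (fun K => 2 / (K * μ)) (𝓝 (2 / (L * μ))) (𝓝 L) := by
    have hval : 2 / (2 / (L * μ) * μ) = L := by field_simp
    have hne : 2 / (L * μ) * μ ≠ 0 := by positivity
    have hcont : ContinuousAt (fun K => 2 / (K * μ)) (2 / (L * μ)) := by
      fun_prop (disch := exact hne)
    simpa only [hval] using hcont.tendsto
  exact hF.tendsto_nhdsGT_zero_of_tendsto_comp h0
    (eventually_mem_nhdsWithin.mono fun K hK => (hx K hK).1)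
    ((hlim.mono_left nhdsWithin_le_nhds).congr'
      (eventually_mem_nhdsWithin.mono fun K hK => (hx K hK).2.symm))

lemma tendsto_atTop_of_eq_two_div (hF : StrictAntiOn F (Ioi 0))
    (htop : Tendsto F atTop (𝓝 0)) {K₀ μ : ℝ} (hμ : 0 < μ) {x : ℝ → ℝ}
    (hx : ∀ K, K₀ < K → 0 < x K ∧ F (x K) = 2 / (K * μ)) : Tendsto x atTop atTop :=
  hF.tendsto_atTop_of_tendsto_comp htop ((eventually_gt_atTop K₀).mono fun K hK => (hx K hK).1)
    ((tendsto_const_nhds.div_atTop (tendsto_id.atTop_mul_const hμ)).congr'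
      ((eventually_gt_atTop K₀).mono fun K hK => (hx K hK).2.symm))

end StrictAntiOn

theorem stmt18_general (g : ℝ → ℝ) (heven : ∀ x, g (-x) = g x) (hcont : Continuous g)
    (hnn : ∀ x, 0 ≤ g x) (hint : Integrable g)
    (huni : AntitoneOn g (Set.Ici 0)) (hg0 : 0 < g 0) :
    let D : ℝ → ℂ := fun lam => ∫ ω : ℝ, (g ω : ℂ) / ((lam : ℂ) - Complex.I * (ω : ℂ))
    (∀ lam > (0:ℝ), (D lam).im = 0) ∧
    StrictAntiOn (fun lam => (D lam).re) (Set.Ioi 0) ∧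
    Tendsto (fun lam => (D lam).re) (𝓝[>] 0) (𝓝 (Real.pi * g 0)) ∧
    Tendsto (fun lam => (D lam).re) atTop (𝓝 0) ∧
    (∀ μ > (0:ℝ), ∀ K > (0:ℝ),
      ((∃! lam : ℝ, 0 < lam ∧ (D lam).re = 2 / (K * μ)) ↔ 2 / (Real.pi * g 0 * μ) < K)) ∧
    (∀ μ > (0:ℝ), ∀ lamF : ℝ → ℝ,
      (∀ K, 2 / (Real.pi * g 0 * μ) < K → 0 < lamF K ∧ (D (lamF K)).re = 2 / (K * μ)) →
      Tendsto lamF (𝓝[>] (2 / (Real.pi * g 0 * μ))) (𝓝[>] 0) ∧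
      Tendsto lamF atTop atTop) := by
  intro D
  have hbdd : ∀ x, |g x| ≤ g 0 := fun x => by
    rw [abs_of_nonneg (hnn x)]
    exact Function.Even.le_of_abs_le heven huni (by simp)
  have hDre : EqOn (fun lam => (D lam).re) (cauchyAverage g) (Ioi 0) :=
    fun _ => re_integral_div_sub_I_mul hint
  have hanti : StrictAntiOn (fun lam => (D lam).re) (Ioi 0) :=
    (strictAntiOn_cauchyAverage hcont hbdd heven huni
      (exists_apply_ne_apply_zero_of_integrable hint hg0.ne')).congr hDre.symm
  have h0 : Tendsto (fun lam => (D lam).re) (𝓝[>] 0) (𝓝 (Real.pi * g 0)) := by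
    rw [← cauchyAverage_zero]
    exact ((continuous_cauchyAverage hcont hbdd).tendsto 0).mono_left nhdsWithin_le_nhds
      |>.congr' (eventuallyEq_nhdsWithin_of_eqOn hDre.symm)
  have htop : Tendsto (fun lam => (D lam).re) atTop (𝓝 0) :=
    (tendsto_cauchyAverage_atTop hnn hint).congr'
      ((eventually_gt_atTop 0).mono fun _ h => (hDre h).symm)
  have hπg0 : 0 < Real.pi * g 0 := by positivity
  refine ⟨fun lam _ => im_integral_div_sub_I_mul_eq_zero heven lam, hanti, h0, htop,
    fun μ hμ K hK => ?_, fun μ hμ lamF hlamF => ⟨?_, ?_⟩⟩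
  · exact hanti.existsUnique_pos_eq_two_div_iff
      ((continuous_cauchyAverage hcont hbdd).continuousOn.congr hDre) h0 htop hπg0 hμ hK
  · exact hanti.tendsto_nhdsGT_zero_of_eq_two_div h0 hπg0 hμ hlamF
  · exact hanti.tendsto_atTop_of_eq_two_div htop hμ hlamF

/-- For an even, unimodal, continuous probability density `g` with `g(0) > 0`, the
function `D(λ) = ∫ g(ω)/(λ−iω) dω` is real-valued and strictly decreasing on the
positive real axis, with `D(0+) = πg(0)` and `D(∞) = 0`; consequently for `μ > 0` the
equation `D(λ) = 2/(Kμ)` has a unique positive solution `λ(μ,K)` iff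
`K > 2/(πg(0)μ)`, and `λ(μ,K) → 0+` as `K → (2/(πg(0)μ))+`, `λ(μ,K) → ∞` as `K → ∞`. -/
theorem stmt18 (g : ℝ → ℝ) (heven : ∀ x, g (-x) = g x) (hcont : Continuous g)
    (hnn : ∀ x, 0 ≤ g x) (hint : Integrable g) (hprob : ∫ ω, g ω = 1)
    (huni : AntitoneOn g (Set.Ici 0)) (hg0 : 0 < g 0) :
    let D : ℝ → ℂ := fun lam => ∫ ω : ℝ, (g ω : ℂ) / ((lam : ℂ) - Complex.I * (ω : ℂ))
    (∀ lam > (0:ℝ), (D lam).im = 0) ∧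
    StrictAntiOn (fun lam => (D lam).re) (Set.Ioi 0) ∧
    Tendsto (fun lam => (D lam).re) (𝓝[>] 0) (𝓝 (Real.pi * g 0)) ∧
    Tendsto (fun lam => (D lam).re) atTop (𝓝 0) ∧
    (∀ μ > (0:ℝ), ∀ K > (0:ℝ),
      ((∃! lam : ℝ, 0 < lam ∧ (D lam).re = 2 / (K * μ)) ↔ 2 / (Real.pi * g 0 * μ) < K)) ∧
    (∀ μ > (0:ℝ), ∀ lamF : ℝ → ℝ,
      (∀ K, 2 / (Real.pi * g 0 * μ) < K → 0 < lamF K ∧ (D (lamF K)).re = 2 / (K * μ)) →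
      Tendsto lamF (𝓝[>] (2 / (Real.pi * g 0 * μ))) (𝓝[>] 0) ∧
      Tendsto lamF atTop atTop) :=
  stmt18_general g heven hcont hnn hint huni hg0
end
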